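/- Inverse expansion of the elementary symmetric functions: in the polynomial ring R[x_1,…,x_n] over any commutative ring R, for all t, a ∈ R and every 0 ≤ p ≤ n, e_p = Σ_{i=0}^{p} f̃_i · [n−p+i choose i]_t · W_{p−i}. -/

import Mathlib

/-!
Both expansions are transforms `e ↦ (p ↦ ∑ᵢ uᵢ [n-p+i, i]_t e_{p-i})`. By the `t`-analogue
`[m, s+j]_t [s+j, s]_t = [m, s]_t [m-s, j]_t` of the subset-of-a-subset identity, the transform
for `v` composed with the one for `u` is again such a transform, whose `k`-th coefficient is
`[n-p+k, k]_t` times the convolution `∑ₛ [k, s]_t u_s v_{k-s}`. So the two transforms are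
mutually inverse once this convolution is `δ_{k,0}`. For `u = f`, `v = f̃` this follows from the
recurrences: the `t`-Pascal rule splits the convolution at `k+1` into two convolutions at `k`,
the `(1+a)`-terms of the recurrences cancel, and the `a`-terms cancel by the absorption identity
`(1 - t^{k-s}) [k, s]_t = (1 - t^{s+1}) [k, s+1]_t`.
-/

noncomputable section
namespace ASC

/-- Gaussian binomial coefficient `[m choose i]_t`, defined by `[m choose 0]_t = 1`,
`[m choose i]_t = 0` for `i > m`, and the Pascal rule
`[m choose i]_t = [m−1 choose i]_t + t^{m−i}·[m−1 choose i−1]_t`. -/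
def gbinom {R : Type*} [CommRing R] (t : R) : ℕ → ℕ → R
  | _, 0 => 1
  | 0, _ + 1 => 0
  | m + 1, i + 1 => gbinom t m (i + 1) + t ^ (m - i) * gbinom t m i

/-- The sequence `f_i`: `f_0 = 1`, `f_1 = −(1+a)`,
`f_i = −(1+a)·f_{i−1} + a·(t^{i−1}−1)·f_{i−2}`. -/
def fseq {R : Type*} [CommRing R] (a t : R) : ℕ → R
  | 0 => 1
  | 1 => -(1 + a)
  | i + 2 => -(1 + a) * fseq a t (i + 1) + a * (t ^ (i + 1) - 1) * fseq a t i

/-- The sequence `f̃_i`: `f̃_0 = 1`, `f̃_1 = 1+a`,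
`f̃_i = (1+a)·t^{i−1}·f̃_{i−1} + a·t^{i−2}·(1−t^{i−1})·f̃_{i−2}`. -/
def ftseq {R : Type*} [CommRing R] (a t : R) : ℕ → R
  | 0 => 1
  | 1 => 1 + a
  | i + 2 => (1 + a) * t ^ (i + 1) * ftseq a t (i + 1) + a * t ^ i * (1 - t ^ (i + 1)) * ftseq a t i

/-- The multivariable Al-Salam–Carlitz polynomial
`W_p = U^{(a)}_{(1^p)} = ∑_{i=0}^p f_i·[n−p+i choose i]_t·e_{p−i}`. -/
def Wpoly {R : Type*} [CommRing R] (n : ℕ) (t a : R) (p : ℕ) : MvPolynomial (Fin n) R :=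
  ∑ i ∈ Finset.range (p + 1),
    MvPolynomial.C (fseq a t i * gbinom t (n - p + i) i) * MvPolynomial.esymm (Fin n) R (p - i)

open Finset

section GaussianBinomial

variable {R : Type*} [CommRing R] (t : R)

@[simp] lemma gbinom_zero_right (m : ℕ) : gbinom t m 0 = 1 := by cases m <;> rfl

lemma gbinom_succ_succ (m i : ℕ) :
    gbinom t (m + 1) (i + 1) = gbinom t m (i + 1) + t ^ (m - i) * gbinom t m i := rfl

lemma gbinom_eq_zero_of_lt {m i : ℕ} (h : m < i) : gbinom t m i = 0 := by
  induction m generalizing i with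
  | zero => obtain ⟨i, rfl⟩ := Nat.exists_eq_succ_of_ne_zero (by omega : i ≠ 0); rfl
  | succ m ih =>
    obtain ⟨i, rfl⟩ := Nat.exists_eq_succ_of_ne_zero (by omega : i ≠ 0)
    rw [gbinom_succ_succ, ih (by omega), ih (by omega), mul_zero, add_zero]

@[simp] lemma gbinom_self (m : ℕ) : gbinom t m m = 1 := by
  induction m with
  | zero => rfl
  | succ m ih => rw [gbinom_succ_succ, ih, gbinom_eq_zero_of_lt t m.lt_succ_self]; simp

lemma one_sub_mul_gbinom_one (m : ℕ) : (1 - t) * gbinom t m 1 = 1 - t ^ m := by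
  induction m with
  | zero => simp [gbinom_eq_zero_of_lt]
  | succ m ih => rw [gbinom_succ_succ, gbinom_zero_right, Nat.sub_zero]; linear_combination ih

lemma one_sub_mul_gbinom_succ_self (m : ℕ) : (1 - t) * gbinom t (m + 1) m = 1 - t ^ (m + 1) := by
  induction m with
  | zero => simp
  | succ m ih =>
    rw [gbinom_succ_succ, gbinom_self, Nat.add_sub_cancel_left]
    linear_combination t * ih

lemma gbinom_mul (m s j : ℕ) :
    gbinom t m (s + j) * gbinom t (s + j) s = gbinom t m s * gbinom t (m - s) j := by
  induction m generalizing s j with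
  | zero =>
    rcases s with _ | s
    · simp
    · rw [gbinom_eq_zero_of_lt t (by omega : 0 < s + 1 + j), gbinom_eq_zero_of_lt t s.succ_pos]
      ring
  | succ m ih =>
    rcases s with _ | s
    · simp
    rcases j with _ | j
    · simp
    rcases lt_or_ge m (s + j + 1) with hm | hm
    · rw [gbinom_eq_zero_of_lt t (by omega : m + 1 < s + 1 + (j + 1)),
        gbinom_eq_zero_of_lt t (by omega : m + 1 - (s + 1) < j + 1)]
      ring
    obtain ⟨l, rfl⟩ := Nat.exists_eq_add_of_le hm
    set m := s + j + 1 + l with hm_eq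
    have ih₁ : gbinom t m (s + j + 2) * gbinom t (s + j + 2) (s + 1)
        = gbinom t m (s + 1) * gbinom t (j + l) (j + 1) := by
      convert ih (s + 1) (j + 1) using 3 <;> omega
    have ih₂ : gbinom t m (s + j + 1) * gbinom t (s + j + 1) (s + 1)
        = gbinom t m (s + 1) * gbinom t (j + l) j := by
      convert ih (s + 1) j using 3 <;> omega
    have ih₃ : gbinom t m (s + j + 1) * gbinom t (s + j + 1) s
        = gbinom t m s * gbinom t (j + l + 1) (j + 1) := by
      convert ih s (j + 1) using 3 <;> omega
    have p₁ : gbinom t (m + 1) (s + j + 2)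
        = gbinom t m (s + j + 2) + t ^ l * gbinom t m (s + j + 1) := by
      rw [gbinom_succ_succ, hm_eq, show s + j + 1 + l - (s + j + 1) = l by omega]
    have p₂ : gbinom t (s + j + 2) (s + 1)
        = gbinom t (s + j + 1) (s + 1) + t ^ (j + 1) * gbinom t (s + j + 1) s := by
      rw [gbinom_succ_succ, show s + j + 1 - s = j + 1 by omega]
    have p₃ : gbinom t (m + 1) (s + 1)
        = gbinom t m (s + 1) + t ^ (j + l + 1) * gbinom t m s := by
      rw [gbinom_succ_succ, hm_eq, show s + j + 1 + l - s = j + l + 1 by omega]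
    have p₄ : gbinom t (j + l + 1) (j + 1)
        = gbinom t (j + l) (j + 1) + t ^ l * gbinom t (j + l) j := by
      rw [gbinom_succ_succ, Nat.add_sub_cancel_left]
    rw [show s + 1 + (j + 1) = s + j + 2 by omega, show m + 1 - (s + 1) = j + l + 1 by omega,
      p₁, p₃]
    linear_combination ih₁ + t ^ l * ih₂ + t ^ l * t ^ (j + 1) * ih₃
      + t ^ l * gbinom t m (s + j + 1) * p₂ - gbinom t m (s + 1) * p₄

lemma one_sub_pow_mul_gbinom (k s : ℕ) :
    (1 - t ^ (k - s)) * gbinom t k s = (1 - t ^ (s + 1)) * gbinom t k (s + 1) := by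
  have h := gbinom_mul t k s 1
  rw [← one_sub_mul_gbinom_one, ← one_sub_mul_gbinom_succ_self]
  linear_combination -(1 - t) * h

end GaussianBinomial

section Convolution

variable {R : Type*} [CommRing R] (t : R)

def gbinomConv (F G : ℕ → R) (k : ℕ) : R :=
  ∑ s ∈ range (k + 1), gbinom t k s * F s * G (k - s)

lemma gbinomConv_succ (F G : ℕ → R) (k : ℕ) :
    gbinomConv t F G (k + 1) =
      gbinomConv t F (fun j => G (j + 1)) k
        + gbinomConv t (fun s => F (s + 1)) (fun j => t ^ j * G j) k := by
  have hlow : ∑ s ∈ range (k + 2), gbinom t k s * F s * G (k + 1 - s)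
      = gbinomConv t F (fun j => G (j + 1)) k := by
    rw [sum_range_succ, gbinom_eq_zero_of_lt t k.lt_succ_self, zero_mul, zero_mul, add_zero]
    refine sum_congr rfl fun s hs => ?_
    rw [show k + 1 - s = k - s + 1 by have := mem_range.mp hs; omega]
  have hhigh : ∑ s ∈ range (k + 2), (gbinom t (k + 1) s - gbinom t k s) * F s * G (k + 1 - s)
      = gbinomConv t (fun s => F (s + 1)) (fun j => t ^ j * G j) k := by
    rw [sum_range_succ', gbinom_zero_right, gbinom_zero_right, sub_self, zero_mul, zero_mul,
      add_zero]
    refine sum_congr rfl fun s hs => ?_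
    rw [gbinom_succ_succ, Nat.add_sub_add_right]
    ring
  rw [← hlow, ← hhigh, ← sum_add_distrib, gbinomConv]
  exact sum_congr rfl fun s _ => by ring

lemma gbinomConv_absorb (F G : ℕ → R) (k : ℕ) :
    gbinomConv t F (fun j => t ^ (j - 1) * (1 - t ^ j) * G (j - 1)) k
      = gbinomConv t (fun s => (1 - t ^ s) * F (s - 1)) (fun j => t ^ j * G j) k := by
  rw [gbinomConv, gbinomConv, sum_range_succ, sum_range_succ']
  simp only [Nat.sub_self, pow_zero, sub_self, zero_mul, mul_zero, add_zero]
  refine sum_congr rfl fun s hs => ?_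
  have hs : s < k := mem_range.mp hs
  have habsorb := one_sub_pow_mul_gbinom t k s
  rw [show k - s = k - (s + 1) + 1 by omega] at habsorb ⊢
  rw [Nat.add_sub_cancel, Nat.add_sub_cancel]
  linear_combination (F s * t ^ (k - (s + 1)) * G (k - (s + 1))) * habsorb

lemma sum_mul_gbinom_mul_gbinom (N k : ℕ) (u v : ℕ → R) :
    ∑ i ∈ range (k + 1), v i * gbinom t (N + i) i * (u (k - i) * gbinom t (N + k) (k - i))
      = gbinom t (N + k) k * gbinomConv t u v k := by
  rw [gbinomConv, mul_sum, ← sum_range_reflect]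
  refine sum_congr rfl fun i hi => ?_
  have hi : i ≤ k := Nat.lt_succ_iff.mp (mem_range.mp hi)
  have h := gbinom_mul t (N + k) i (k - i)
  rw [Nat.add_sub_cancel' hi, Nat.add_sub_assoc hi] at h
  rw [Nat.add_sub_cancel, Nat.sub_sub_self hi]
  linear_combination -(u i * v (k - i)) * h

end Convolution

section Sequences

variable {R : Type*} [CommRing R] (t a : R)

-- At `s = 0` the truncated `s - 1` is harmless: its coefficient `t ^ 0 - 1` vanishes.
lemma fseq_succ (s : ℕ) :
    fseq a t (s + 1) = -(1 + a) * fseq a t s + a * (t ^ s - 1) * fseq a t (s - 1) := by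
  cases s with
  | zero => simp [fseq]
  | succ s => rfl

lemma ftseq_succ (j : ℕ) :
    ftseq a t (j + 1)
      = (1 + a) * t ^ j * ftseq a t j + a * t ^ (j - 1) * (1 - t ^ j) * ftseq a t (j - 1) := by
  cases j with
  | zero => simp [ftseq]
  | succ j => rfl

lemma gbinomConv_fseq_ftseq (k : ℕ) :
    gbinomConv t (fseq a t) (ftseq a t) k = if k = 0 then 1 else 0 := by
  cases k with
  | zero => simp [gbinomConv, fseq, ftseq]
  | succ k =>
    have habsorb := gbinomConv_absorb t (fseq a t) (ftseq a t) k
    rw [← sub_eq_zero] at habsorb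
    rw [gbinomConv_succ, if_neg k.succ_ne_zero, ← mul_zero a, ← habsorb]
    simp only [gbinomConv]
    rw [← sum_add_distrib, ← sum_sub_distrib, mul_sum]
    refine sum_congr rfl fun s _ => ?_
    rw [fseq_succ, ftseq_succ]
    ring

end Sequences

section Transform

variable {R M : Type*} [CommRing R] [AddCommGroup M] [Module R M] (t : R)

def gbinomTransform (n : ℕ) (u : ℕ → R) (e : ℕ → M) (p : ℕ) : M :=
  ∑ i ∈ range (p + 1), (u i * gbinom t (n - p + i) i) • e (p - i)

theorem gbinomTransform_gbinomTransform {u v : ℕ → R}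
    (huv : ∀ k, gbinomConv t u v k = if k = 0 then 1 else 0) (e : ℕ → M) {n p : ℕ}
    (hp : p ≤ n) :
    gbinomTransform t n v (gbinomTransform t n u e) p = e p := by
  simp only [gbinomTransform, smul_sum, smul_smul]
  calc ∑ i ∈ range (p + 1), ∑ j ∈ range (p - i + 1),
        (v i * gbinom t (n - p + i) i * (u j * gbinom t (n - (p - i) + j) j)) • e (p - i - j)
      = ∑ k ∈ range (p + 1), ∑ i ∈ range (k + 1),
        (v i * gbinom t (n - p + i) i * (u (k - i) * gbinom t (n - (p - i) + (k - i)) (k - i)))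
          • e (p - i - (k - i)) := by
        rw [sum_congr rfl fun i hi => by rw [← Nat.sub_add_comm (mem_range_succ_iff.mp hi)]]
        exact (sum_range_diag_flip _ _).symm
    _ = ∑ k ∈ range (p + 1), (gbinom t (n - p + k) k * gbinomConv t u v k) • e (p - k) := by
        refine sum_congr rfl fun k hk => ?_
        rw [← sum_mul_gbinom_mul_gbinom, sum_smul]
        refine sum_congr rfl fun i hi => ?_
        have := mem_range_succ_iff.mp hk
        have := mem_range_succ_iff.mp hi
        rw [show n - (p - i) + (k - i) = n - p + k by omega, show p - i - (k - i) = p - k by omega]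
    _ = e p := by simp [huv]

end Transform

lemma Wpoly_eq_gbinomTransform {R : Type*} [CommRing R] (n : ℕ) (t a : R) :
    Wpoly n t a = gbinomTransform t n (fseq a t) (MvPolynomial.esymm (Fin n) R) := by
  funext p
  simp only [Wpoly, gbinomTransform, MvPolynomial.C_mul']

/-- STATEMENT 15: inverse expansion of the elementary symmetric functions:
`e_p = ∑_{i=0}^p f̃_i·[n−p+i choose i]_t·W_{p−i}` for `0 ≤ p ≤ n`. -/
theorem statement15 {R : Type*} [CommRing R] (n : ℕ) (t a : R) (p : ℕ) (hp : p ≤ n) :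
    MvPolynomial.esymm (Fin n) R p
      = ∑ i ∈ Finset.range (p + 1),
          MvPolynomial.C (ftseq a t i * gbinom t (n - p + i) i) * Wpoly n t a (p - i) := by
  simp only [MvPolynomial.C_mul', Wpoly_eq_gbinomTransform]
  exact (gbinomTransform_gbinomTransform t (gbinomConv_fseq_ftseq t a) _ hp).symm

end ASC
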